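/- If Z is standard Gaussian and X is independent of Z taking values ±√P each with probability 1/2, then the mutual information I(X; sgn(X+Z)) equals log 2 − H_b(Q(√P)), where H_b is the binary entropy function and Q the Gaussian tail function. -/
import Mathlib


open Real MeasureTheory ProbabilityTheory

/-- The Gaussian tail function Q. -/
noncomputable def Qfun (x : ℝ) : ℝ :=
  (1 / Real.sqrt (2 * π)) * ∫ ξ in Set.Ioi x, Real.exp (-ξ^2 / 2)

/-- The binary entropy function (natural logarithm, with 0·log 0 = 0). -/
noncomputable def Hb (p : ℝ) : ℝ := -(p * Real.log p) - (1 - p) * Real.log (1 - p)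

/-- Joint p.m.f. of (X, sgn(X+Z)) where X = ±√P equiprobably (encoded by a Bool,
`true` ↦ +√P) independent of a standard Gaussian Z, and sgn(y) = 1 iff y ≥ 0
(the output is encoded by a Bool, `true` ↦ 1). -/
noncomputable def jointP (P : ℝ) (x y : Bool) : ℝ :=
  (1/2) * ((gaussianReal 0 1)
    {z : ℝ | (0 ≤ (if x then Real.sqrt P else -Real.sqrt P) + z) ↔ y = true}).toReal

lemma g_integrable : Integrable (fun x : ℝ => Real.exp (-x^2 / 2)) := by
  have : (fun x : ℝ => Real.exp (-x^2 / 2)) = fun x : ℝ => Real.exp (-(1/2 : ℝ) * x ^ 2) := by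
    ext x; ring_nf
  rw [this]
  exact integrable_exp_neg_mul_sq (by norm_num)

lemma g_total : ∫ x : ℝ, Real.exp (-x^2 / 2) = Real.sqrt (2 * π) := by
  have : (fun x : ℝ => Real.exp (-x^2 / 2)) = fun x : ℝ => Real.exp (-(1/2 : ℝ) * x ^ 2) := by
    ext x; ring_nf
  rw [this, integral_gaussian, show π / (1/2 : ℝ) = 2 * π by ring]

lemma gauss_Ici (a : ℝ) : ((gaussianReal 0 1) (Set.Ici a)).toReal = Qfun a := by
  rw [gaussianReal_apply_eq_integral 0 one_ne_zero]
  rw [ENNReal.toReal_ofReal (setIntegral_nonneg measurableSet_Ici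
    (fun x _ => gaussianPDFReal_nonneg 0 1 x))]
  have hpdf : ∀ x : ℝ, gaussianPDFReal 0 1 x
      = (1 / Real.sqrt (2 * π)) * Real.exp (-x^2 / 2) := by
    intro x
    simp [gaussianPDFReal]
  simp_rw [hpdf, Qfun]
  rw [MeasureTheory.integral_const_mul, MeasureTheory.integral_Ici_eq_integral_Ioi]

lemma gauss_Iio (a : ℝ) : ((gaussianReal 0 1) (Set.Iio a)).toReal = 1 - Qfun a := by
  have h : (gaussianReal 0 1) (Set.Iio a) = 1 - (gaussianReal 0 1) (Set.Ici a) := by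
    rw [← Set.compl_Ici, prob_compl_eq_one_sub measurableSet_Ici]
  rw [h, ENNReal.toReal_sub_of_le (prob_le_one) (by simp), ENNReal.toReal_one, gauss_Ici]

lemma Qfun_neg (a : ℝ) : Qfun (-a) = 1 - Qfun a := by
  have hsym : (∫ ξ in Set.Ioi (-a), Real.exp (-ξ^2 / 2))
      = ∫ ξ in Set.Iic a, Real.exp (-ξ^2 / 2) := by
    have := integral_comp_neg_Ioi (-a) (fun x => Real.exp (-x^2 / 2))
    simp only [neg_neg] at this
    rw [← this]
    congr 1; ext x; ring_nf
  have hsplit : (∫ ξ in Set.Iic a, Real.exp (-ξ^2 / 2))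
      + (∫ ξ in Set.Ioi a, Real.exp (-ξ^2 / 2)) = Real.sqrt (2 * π) := by
    rw [← g_total]
    exact intervalIntegral.integral_Iic_add_Ioi g_integrable.integrableOn g_integrable.integrableOn
  have h2π : Real.sqrt (2 * π) ≠ 0 := by positivity
  rw [Qfun, Qfun, hsym]
  have h3 : (∫ ξ in Set.Iic a, Real.exp (-ξ^2 / 2))
      = Real.sqrt (2 * π) - ∫ ξ in Set.Ioi a, Real.exp (-ξ^2 / 2) := by linarith
  rw [h3, mul_sub, one_div, inv_mul_cancel₀ h2π]

lemma Qfun_pos (a : ℝ) : 0 < Qfun a := by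
  rw [Qfun]
  apply mul_pos (by positivity)
  apply setIntegral_pos_iff_support_of_nonneg_ae (ae_of_all _ fun x => (Real.exp_pos _).le)
    g_integrable.integrableOn |>.mpr
  have : (Function.support fun ξ : ℝ => Real.exp (-ξ^2 / 2)) = Set.univ := by
    ext x; simp [Function.support, Real.exp_ne_zero]
  rw [this, Set.univ_inter]
  exact Measure.measure_Ioi_pos volume a

/-- The mutual information I(X; sgn(X+Z)) equals log 2 − H_b(Q(√P)). -/
theorem mutualInfo_one_bit_quantizer (P : ℝ) (hP : 0 ≤ P) :
    (∑ x : Bool, ∑ y : Bool, jointP P x y *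
        Real.log (jointP P x y /
          ((∑ y' : Bool, jointP P x y') * (∑ x' : Bool, jointP P x' y))))
      = Real.log 2 - Hb (Qfun (Real.sqrt P)) := by
  set q := Qfun (Real.sqrt P) with hq
  have hq0 : 0 < q := Qfun_pos _
  have hq1 : q < 1 := by
    have := Qfun_pos (-(Real.sqrt P))
    rw [Qfun_neg] at this; linarith
  have hTT : jointP P true true = (1 - q) / 2 := by
    rw [jointP]
    have : {z : ℝ | (0 ≤ (if true then Real.sqrt P else -Real.sqrt P) + z) ↔ (true = true)}
        = Set.Ici (-(Real.sqrt P)) := by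
      ext z
      rw [show (if (true : Bool) then Real.sqrt P else -Real.sqrt P) = Real.sqrt P from rfl]
      simp only [Set.mem_setOf_eq, Set.mem_Ici, show ((true : Bool) = true) ↔ True by simp,
        iff_true]
      constructor <;> intro h <;> linarith
    rw [this, gauss_Ici, Qfun_neg]; ring
  have hTF : jointP P true false = q / 2 := by
    rw [jointP]
    have : {z : ℝ | (0 ≤ (if true then Real.sqrt P else -Real.sqrt P) + z) ↔ (false = true)}
        = Set.Iio (-(Real.sqrt P)) := by
      ext z
      rw [show (if (true : Bool) then Real.sqrt P else -Real.sqrt P) = Real.sqrt P from rfl]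
      simp only [Set.mem_setOf_eq, Set.mem_Iio, show ((false : Bool) = true) ↔ False by simp,
        iff_false, not_le]
      constructor <;> intro h <;> linarith
    rw [this, gauss_Iio, Qfun_neg]; ring
  have hFT : jointP P false true = q / 2 := by
    rw [jointP]
    have : {z : ℝ | (0 ≤ (if false then Real.sqrt P else -Real.sqrt P) + z) ↔ (true = true)}
        = Set.Ici (Real.sqrt P) := by
      ext z
      rw [show (if (false : Bool) then Real.sqrt P else -Real.sqrt P) = -Real.sqrt P from rfl]
      simp only [Set.mem_setOf_eq, Set.mem_Ici, show ((true : Bool) = true) ↔ True by simp,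
        iff_true]
      constructor <;> intro h <;> linarith
    rw [this, gauss_Ici]; ring
  have hFF : jointP P false false = (1 - q) / 2 := by
    rw [jointP]
    have : {z : ℝ | (0 ≤ (if false then Real.sqrt P else -Real.sqrt P) + z) ↔ (false = true)}
        = Set.Iio (Real.sqrt P) := by
      ext z
      rw [show (if (false : Bool) then Real.sqrt P else -Real.sqrt P) = -Real.sqrt P from rfl]
      simp only [Set.mem_setOf_eq, Set.mem_Iio, show ((false : Bool) = true) ↔ False by simp,
        iff_false, not_le]
      constructor <;> intro h <;> linarith
    rw [this, gauss_Iio]; ring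
  rw [Fintype.sum_bool]
  simp only [Fintype.sum_bool, hTT, hTF, hFT, hFF]
  have e1 : (1 - q) / 2 + q / 2 = 1 / 2 := by ring
  have e2 : q / 2 + (1 - q) / 2 = 1 / 2 := by ring
  rw [e1, e2]
  have hlogq : Real.log (q / 2 / (1 / 2 * (1 / 2))) = Real.log 2 + Real.log q := by
    rw [show q / 2 / (1 / 2 * (1 / 2)) = 2 * q by ring, Real.log_mul two_ne_zero (ne_of_gt hq0)]
  have hlog1q : Real.log ((1 - q) / 2 / (1 / 2 * (1 / 2))) = Real.log 2 + Real.log (1 - q) := by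
    rw [show (1 - q) / 2 / (1 / 2 * (1 / 2)) = 2 * (1 - q) by ring,
      Real.log_mul two_ne_zero (by linarith)]
  rw [hlogq, hlog1q, Hb]
  ring
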